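/- arXiv:2409.05631 — 4 statements merged into one kernel-verified Lean document; each statement's English description precedes it below -/
import Mathlib

section
/- Let x satisfy Q(α) ≤ x < Q(γ). Then ∫_{-∞}^{x} J(F(y)) dy = (1/(γ−α))·( F(x)·x − ∫_{α}^{F(x)} Q(u) du − α·x ). -/
/-!
On `[Q α, x]` the weight is the linear ramp `(F y - α) / (γ - α)`, and to the left of `Q α` it
vanishes. The integral of `F` over `[Q α, x]` is the area under its graph; reflecting that region
in the diagonal turns it into the region to the left of the graph of the inverse `Q` over
`[α, F x]`, which gives `∫ F + ∫ Q = x F(x) - Q(α) α`.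
-/

open MeasureTheory intervalIntegral Set

variable {F Q : ℝ → ℝ} {a b : ℝ}

theorem ContinuousOn.mapsTo_Icc_of_leftInvOn (hab : a ≤ b) (hF : ContinuousOn F (Icc a b))
    (hQ : LeftInvOn Q F (Icc a b)) {u : ℝ} (hu : u ∈ Icc (F a) (F b)) :
    Q u ∈ Icc a b ∧ F (Q u) = u := by
  obtain ⟨z, hz, rfl⟩ := intermediate_value_Icc hab hF hu
  rw [hQ hz]
  exact ⟨hz, rfl⟩

namespace StrictMonoOn

theorem monotoneOn_leftInvOn (hmono : StrictMonoOn F (Icc a b)) (hab : a ≤ b)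
    (hF : ContinuousOn F (Icc a b)) (hQ : LeftInvOn Q F (Icc a b)) :
    MonotoneOn Q (Icc (F a) (F b)) := by
  intro u hu v hv huv
  obtain ⟨hQu, hFQu⟩ := hF.mapsTo_Icc_of_leftInvOn hab hQ hu
  obtain ⟨hQv, hFQv⟩ := hF.mapsTo_Icc_of_leftInvOn hab hQ hv
  rwa [← hmono.le_iff_le hQu hQv, hFQu, hFQv]

theorem preimage_swap_regionBetween (hmono : StrictMonoOn F (Icc a b)) (hab : a ≤ b)
    (hF : ContinuousOn F (Icc a b)) (hQ : LeftInvOn Q F (Icc a b)) :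
    Prod.swap ⁻¹' regionBetween (fun _ => F a) F (Ioo a b) =
      regionBetween Q (fun _ => b) (Ioo (F a) (F b)) := by
  ext ⟨u, y⟩
  simp only [mem_preimage, Prod.swap_prod_mk, regionBetween, mem_ofPred_eq, mem_Ioo]
  constructor
  · rintro ⟨⟨hay, hyb⟩, hau, huy⟩
    have hFyb : F y < F b := hmono (Ioo_subset_Icc_self ⟨hay, hyb⟩) (right_mem_Icc.2 hab) hyb
    obtain ⟨hQu, hFQu⟩ := hF.mapsTo_Icc_of_leftInvOn hab hQ ⟨hau.le, (huy.trans hFyb).le⟩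
    refine ⟨⟨hau, huy.trans hFyb⟩, ?_, hyb⟩
    rw [← hFQu] at huy
    exact (hmono.lt_iff_lt hQu (Ioo_subset_Icc_self ⟨hay, hyb⟩)).1 huy
  · rintro ⟨⟨hau, hub⟩, hQuy, hyb⟩
    obtain ⟨hQu, hFQu⟩ := hF.mapsTo_Icc_of_leftInvOn hab hQ ⟨hau.le, hub.le⟩
    have hy : y ∈ Icc a b := ⟨hQu.1.trans hQuy.le, hyb.le⟩
    refine ⟨⟨hQu.1.trans_lt hQuy, hyb⟩, hau, ?_⟩
    rw [← hFQu]
    exact hmono hQu hy hQuy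

theorem integral_sub_eq_integral_leftInvOn (hmono : StrictMonoOn F (Icc a b)) (hab : a ≤ b)
    (hF : ContinuousOn F (Icc a b)) (hQ : LeftInvOn Q F (Icc a b)) :
    ∫ y in a..b, (F y - F a) = ∫ u in F a..F b, (b - Q u) := by
  have hFab : F a ≤ F b := hmono.monotoneOn (left_mem_Icc.2 hab) (right_mem_Icc.2 hab) hab
  have hFint : IntegrableOn F (Ioo a b) := hF.integrableOn_Icc.mono_set Ioo_subset_Icc_self
  have hQint : IntegrableOn Q (Ioo (F a) (F b)) :=
    ((hmono.monotoneOn_leftInvOn hab hF hQ).integrableOn_isCompact isCompact_Icc).mono_set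
      Ioo_subset_Icc_self
  have hFa_le : ∀ y ∈ Ioo a b, F a ≤ F y := fun y hy =>
    hmono.monotoneOn (left_mem_Icc.2 hab) (Ioo_subset_Icc_self hy) hy.1.le
  have hQ_le : ∀ u ∈ Ioo (F a) (F b), Q u ≤ b := fun u hu =>
    (hF.mapsTo_Icc_of_leftInvOn hab hQ (Ioo_subset_Icc_self hu)).1.2
  have hvol₁ := volume_regionBetween_eq_integral (integrableOn_const measure_Ioo_lt_top.ne)
    hFint measurableSet_Ioo hFa_le
  have hvol₂ := volume_regionBetween_eq_integral hQint
    (integrableOn_const measure_Ioo_lt_top.ne) measurableSet_Ioo hQ_le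
  have hswap : (volume : Measure ℝ).prod volume
      (Prod.swap ⁻¹' regionBetween (fun _ => F a) F (Ioo a b)) =
      (volume : Measure ℝ).prod volume (regionBetween (fun _ => F a) F (Ioo a b)) :=
    MeasurePreserving.measure_preimage_equiv (f := MeasurableEquiv.prodComm)
      Measure.measurePreserving_swap _
  rw [hmono.preimage_swap_regionBetween hab hF hQ, hvol₁, hvol₂,
    ENNReal.ofReal_eq_ofReal_iff] at hswap
  · rw [integral_of_le hab, integral_of_le hFab, integral_Ioc_eq_integral_Ioo,
      integral_Ioc_eq_integral_Ioo]
    exact hswap.symm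
  · exact setIntegral_nonneg measurableSet_Ioo fun u hu => sub_nonneg.2 (hQ_le u hu)
  · exact setIntegral_nonneg measurableSet_Ioo fun y hy => sub_nonneg.2 (hFa_le y hy)

theorem integral_add_integral_leftInvOn (hmono : StrictMonoOn F (Icc a b)) (hab : a ≤ b)
    (hF : ContinuousOn F (Icc a b)) (hQ : LeftInvOn Q F (Icc a b)) :
    (∫ y in a..b, F y) + ∫ u in F a..F b, Q u = b * F b - a * F a := by
  have hFab : F a ≤ F b := hmono.monotoneOn (left_mem_Icc.2 hab) (right_mem_Icc.2 hab) hab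
  have hQint : IntervalIntegrable Q volume (F a) (F b) := by
    apply MonotoneOn.intervalIntegrable
    rw [uIcc_of_le hFab]
    exact hmono.monotoneOn_leftInvOn hab hF hQ
  have h := hmono.integral_sub_eq_integral_leftInvOn hab hF hQ
  rw [integral_sub (hF.intervalIntegrable_of_Icc hab) intervalIntegrable_const,
    integral_sub intervalIntegrable_const hQint, intervalIntegral.integral_const,
    intervalIntegral.integral_const, smul_eq_mul, smul_eq_mul] at h
  linarith

end StrictMonoOn

theorem trimmedWeight_eq_of_lt {α γ u : ℝ} (hγ : γ ≤ 1/2) (hu : u < γ) :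
    (if α ≤ u ∧ u < γ then (u - α) / (γ - α)
      else if γ ≤ u ∧ u ≤ 1 - γ then 1
      else if 1 - γ < u ∧ u ≤ 1 - α then (1 - u - α) / (γ - α)
      else 0) = max (u - α) 0 / (γ - α) := by
  by_cases hαu : α ≤ u
  · rw [if_pos ⟨hαu, hu⟩, max_eq_left (sub_nonneg.2 hαu)]
  · rw [if_neg fun h => hαu h.1, if_neg fun h => (h.1.trans_lt hu).false,
      if_neg fun h => by linarith [h.1], max_eq_right (by linarith), zero_div]

theorem smoothly_trimmed_E1
    (α γ : ℝ) (hα : 0 < α) (hαγ : α < γ) (hγ : γ ≤ 1/2)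
    (J F Q : ℝ → ℝ)
    (hJ : ∀ u : ℝ, J u =
      if α ≤ u ∧ u < γ then (u - α) / (γ - α)
      else if γ ≤ u ∧ u ≤ 1 - γ then 1
      else if 1 - γ < u ∧ u ≤ 1 - α then (1 - u - α) / (γ - α)
      else 0)
    (hFcont : Continuous F) (hFmono : StrictMono F)
    (hFQ : ∀ p ∈ Set.Ioo (0:ℝ) 1, F (Q p) = p)
    (hQF : ∀ x : ℝ, Q (F x) = x)
    (x : ℝ) (hx1 : Q α ≤ x) (hx2 : x < Q γ) :
    ∫ y in Set.Iic x, J (F y) =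
      (1 / (γ - α)) * (F x * x - (∫ u in α..(F x), Q u) - α * x) := by
  have hFQα : F (Q α) = α := hFQ α ⟨hα, by linarith⟩
  have hFx : F x < γ := hFQ γ ⟨hα.trans hαγ, by linarith⟩ ▸ hFmono hx2
  have hJF : EqOn (fun y => J (F y))
      ((Ioc (Q α) x).indicator fun y => (F y - α) / (γ - α)) (Iic x) := by
    intro y hy
    show J (F y) = _
    rw [hJ, trimmedWeight_eq_of_lt hγ ((hFmono.monotone hy).trans_lt hFx)]
    by_cases hy' : Q α < y
    · rw [indicator_of_mem (show y ∈ Ioc (Q α) x from ⟨hy', hy⟩),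
        max_eq_left (sub_nonneg.2 (hFQα ▸ (hFmono hy').le))]
    · rw [indicator_of_notMem fun h => hy' h.1,
        max_eq_right (sub_nonpos.2 (hFQα ▸ hFmono.monotone (not_lt.1 hy'))), zero_div]
  have hinv := (hFmono.strictMonoOn (Icc (Q α) x)).integral_add_integral_leftInvOn hx1
    hFcont.continuousOn fun y _ => hQF y
  rw [hFQα] at hinv
  calc ∫ y in Iic x, J (F y) = ∫ y in Q α..x, (F y - α) / (γ - α) := by
        rw [setIntegral_congr_fun measurableSet_Iic hJF, setIntegral_indicator measurableSet_Ioc,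
          inter_eq_self_of_subset_right Ioc_subset_Iic_self, integral_of_le hx1]
    _ = (1 / (γ - α)) * ((∫ y in Q α..x, F y) - (x - Q α) * α) := by
        rw [intervalIntegral.integral_div,
          integral_sub (hFcont.intervalIntegrable _ _) intervalIntegrable_const,
          intervalIntegral.integral_const, smul_eq_mul]
        ring
    _ = _ := by
        congr 1
        linarith
end

section
/- Let x satisfy Q(γ) ≤ x ≤ Q(1−γ). Then ∫_{-∞}^{x} J(F(y)) dy = (1/(γ−α))·( (γ−α)·Q(γ) − ∫_{α}^{γ} Q(u) du ) + x − Q(γ). -/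
/-!
On `(-∞, Q α]` the weight `J ∘ F` vanishes, on `[Q γ, x]` it is `1`, and on `[Q α, Q γ]` it is
`(F - α) / (γ - α)`. The only real work is `∫_{Q α}^{Q γ} (F y - α) dy`: it is the area of
`{(y, u) : α < u ≤ F y}` inside `(Q α, Q γ] × (α, γ]`, and since `u ≤ F y ↔ Q u ≤ y` there,
Fubini computes the same area as `∫_α^γ (Q γ - Q u) du`.
-/

open MeasureTheory intervalIntegral Set

lemma integral_Ioc_sub_eq_integral_Ioc_sub {F Q : ℝ → ℝ} {a b α γ : ℝ} (hF : Measurable F)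
    (hF_maps : MapsTo F (Ioc a b) (Ioc α γ)) (hQ_maps : MapsTo Q (Ioc α γ) (Ioc a b))
    (hle_iff : ∀ u ∈ Ioc α γ, ∀ y, u ≤ F y ↔ Q u ≤ y) :
    ∫ y in Ioc a b, (F y - α) = ∫ u in Ioc α γ, (b - Q u) := by
  set S : Set (ℝ × ℝ) := {p | p.2 ≤ F p.1}
  have hS : MeasurableSet S := measurableSet_le measurable_snd (hF.comp measurable_fst)
  have h_int : Integrable (Function.uncurry fun y u => S.indicator (1 : ℝ × ℝ → ℝ) (y, u))
      ((volume.restrict (Ioc a b)).prod (volume.restrict (Ioc α γ))) :=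
    (integrable_const (1 : ℝ)).indicator hS
  have h_inner_u : ∀ y ∈ Ioc a b, ∫ u in Ioc α γ, S.indicator 1 (y, u) = F y - α := by
    intro y hy
    obtain ⟨hαF, hFγ⟩ := hF_maps hy
    have h_fibre : (fun u => S.indicator (1 : ℝ × ℝ → ℝ) (y, u)) = (Iic (F y)).indicator 1 := by
      ext u; simp [S, indicator_apply]
    rw [h_fibre, integral_indicator_one measurableSet_Iic,
      measureReal_restrict_apply measurableSet_Iic, Iic_inter_Ioc_of_le hFγ,
      Real.volume_real_Ioc_of_le hαF.le]
  have h_inner_y : ∀ u ∈ Ioc α γ, ∫ y in Ioc a b, S.indicator 1 (y, u) = b - Q u := by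
    intro u hu
    obtain ⟨haQ, hQb⟩ := hQ_maps hu
    have h_fibre : (fun y => S.indicator (1 : ℝ × ℝ → ℝ) (y, u)) = (Ici (Q u)).indicator 1 := by
      ext y; simp [S, indicator_apply, hle_iff u hu y]
    rw [h_fibre, integral_indicator_one measurableSet_Ici,
      measureReal_restrict_apply measurableSet_Ici]
    have h_slice : Ici (Q u) ∩ Ioc a b = Icc (Q u) b := by
      ext y
      simp only [mem_inter_iff, mem_Ici, mem_Ioc, mem_Icc]
      exact ⟨fun h => ⟨h.1, h.2.2⟩, fun h => ⟨h.1, haQ.trans_le h.1, h.2⟩⟩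
    rw [h_slice, Real.volume_real_Icc_of_le hQb]
  calc ∫ y in Ioc a b, (F y - α) = ∫ y in Ioc a b, ∫ u in Ioc α γ, S.indicator 1 (y, u) :=
        setIntegral_congr_fun measurableSet_Ioc fun y hy => (h_inner_u y hy).symm
    _ = ∫ u in Ioc α γ, ∫ y in Ioc a b, S.indicator 1 (y, u) := integral_integral_swap h_int
    _ = ∫ u in Ioc α γ, (b - Q u) := setIntegral_congr_fun measurableSet_Ioc h_inner_y

theorem StrictMono.integral_sub_eq_of_rightInvOn {F Q : ℝ → ℝ} {α γ : ℝ}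
    (hF : StrictMono F) (hQ : RightInvOn Q F (Icc α γ)) (hαγ : α ≤ γ) :
    ∫ y in Q α..Q γ, (F y - α) = (γ - α) * Q γ - ∫ u in α..γ, Q u := by
  have hα : α ∈ Icc α γ := left_mem_Icc.2 hαγ
  have hγ : γ ∈ Icc α γ := right_mem_Icc.2 hαγ
  have hle_iff : ∀ u ∈ Icc α γ, ∀ y, u ≤ F y ↔ Q u ≤ y := fun u hu y => by
    rw [← hF.le_iff_le (a := Q u), hQ hu]
  have hQ_mono : MonotoneOn Q (Icc α γ) := fun u hu v hv huv =>
    (hle_iff u hu _).1 (huv.trans_eq (hQ hv).symm)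
  have hF_maps : MapsTo F (Ioc (Q α) (Q γ)) (Ioc α γ) := fun y hy =>
    ⟨(hQ hα).symm.trans_lt (hF hy.1), (hF.monotone hy.2).trans_eq (hQ hγ)⟩
  have hQ_maps : MapsTo Q (Ioc α γ) (Ioc (Q α) (Q γ)) := fun u hu =>
    ⟨hF.lt_iff_lt.1 (by rw [hQ hα, hQ (Ioc_subset_Icc_self hu)]; exact hu.1),
      hQ_mono (Ioc_subset_Icc_self hu) hγ hu.2⟩
  have hQ_int : IntervalIntegrable Q volume α γ := (uIcc_of_le hαγ ▸ hQ_mono).intervalIntegrable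
  rw [integral_of_le (hQ_mono hα hγ hαγ), integral_Ioc_sub_eq_integral_Ioc_sub
    hF.monotone.measurable hF_maps hQ_maps fun u hu => hle_iff u (Ioc_subset_Icc_self hu),
    ← integral_of_le hαγ, integral_sub intervalIntegrable_const hQ_int,
    intervalIntegral.integral_const, smul_eq_mul]

lemma setIntegral_Iic_eq_intervalIntegral {E : Type*} [NormedAddCommGroup E] [NormedSpace ℝ E]
    {f : ℝ → E} {a b : ℝ} (hab : a ≤ b) (hf : ∀ y ≤ a, f y = 0) :
    ∫ y in Iic b, f y = ∫ y in a..b, f y := by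
  rw [integral_of_le hab, setIntegral_eq_of_subset_of_forall_sdiff_eq_zero measurableSet_Iic
    Ioc_subset_Iic_self fun y hy => hf y (not_lt.1 fun h => hy.2 ⟨h, hy.1⟩)]

noncomputable def trimWeight (α γ u : ℝ) : ℝ :=
  if α ≤ u ∧ u < γ then (u - α) / (γ - α)
  else if γ ≤ u ∧ u ≤ 1 - γ then 1
  else if 1 - γ < u ∧ u ≤ 1 - α then (1 - u - α) / (γ - α)
  else 0

section trimWeight

variable {α γ u : ℝ}

lemma trimWeight_eq_zero_of_le (hαγ : α < γ) (hγ : γ ≤ 1 / 2) (hu : u ≤ α) :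
    trimWeight α γ u = 0 := by
  unfold trimWeight
  split_ifs with h_rise h_flat h_fall
  · rw [le_antisymm hu h_rise.1, sub_self, zero_div]
  · linarith [h_flat.1]
  · linarith [h_fall.1]
  · rfl

lemma trimWeight_eq_of_mem_Icc (hαγ : α < γ) (hγ : γ ≤ 1 / 2) (hu : u ∈ Icc α γ) :
    trimWeight α γ u = (u - α) / (γ - α) := by
  rcases hu.2.lt_or_eq with hlt | rfl
  · rw [trimWeight, if_pos ⟨hu.1, hlt⟩]
  · rw [trimWeight, if_neg (fun h => h.2.false), if_pos ⟨le_rfl, by linarith⟩,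
      div_self (sub_ne_zero.2 hαγ.ne')]

lemma trimWeight_eq_one (hu : u ∈ Icc γ (1 - γ)) : trimWeight α γ u = 1 := by
  rw [trimWeight, if_neg (fun h => hu.1.not_gt h.2), if_pos ⟨hu.1, hu.2⟩]

end trimWeight

theorem smoothly_trimmed_E2_general
    (α γ : ℝ) (hα : 0 < α) (hαγ : α < γ) (hγ : γ ≤ 1/2)
    (J F Q : ℝ → ℝ)
    (hJ : ∀ u : ℝ, J u =
      if α ≤ u ∧ u < γ then (u - α) / (γ - α)
      else if γ ≤ u ∧ u ≤ 1 - γ then 1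
      else if 1 - γ < u ∧ u ≤ 1 - α then (1 - u - α) / (γ - α)
      else 0)
    (hFmono : StrictMono F)
    (hFQ : ∀ p ∈ Set.Ioo (0:ℝ) 1, F (Q p) = p)
    (x : ℝ) (hx1 : Q γ ≤ x) (hx2 : x ≤ Q (1 - γ)) :
    ∫ y in Set.Iic x, J (F y) =
      (1 / (γ - α)) * ((γ - α) * Q γ - (∫ u in α..γ, Q u)) + x - Q γ := by
  obtain rfl : J = trimWeight α γ := funext hJ
  have hQ : RightInvOn Q F (Icc α (1 - γ)) := fun u hu =>
    hFQ u ⟨hα.trans_le hu.1, hu.2.trans_lt (by linarith)⟩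
  have hQα : F (Q α) = α := hQ ⟨le_rfl, by linarith⟩
  have hQγ : F (Q γ) = γ := hQ ⟨hαγ.le, by linarith⟩
  have hQαγ : Q α ≤ Q γ := hFmono.le_iff_le.1 (by rw [hQα, hQγ]; exact hαγ.le)
  have h_rise : EqOn (fun y => trimWeight α γ (F y)) (fun y => (F y - α) / (γ - α))
      (uIcc (Q α) (Q γ)) := fun y hy => trimWeight_eq_of_mem_Icc hαγ hγ <| by
    simpa only [hQα, hQγ, uIcc_of_le hαγ.le] using hFmono.monotone.mapsTo_uIcc hy
  have h_flat : EqOn (fun y => trimWeight α γ (F y)) (fun _ => 1) (uIcc (Q γ) x) := fun y hy =>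
    trimWeight_eq_one <| by
      rw [uIcc_of_le hx1] at hy
      exact ⟨hQγ.symm.trans_le (hFmono.monotone hy.1),
        (hFmono.monotone (hy.2.trans hx2)).trans_eq (hQ ⟨by linarith, le_rfl⟩)⟩
  have h_rise_int : IntervalIntegrable (fun y => trimWeight α γ (F y)) volume (Q α) (Q γ) :=
    ((hFmono.monotone.add_const (-α)).div_const (sub_pos.2 hαγ).le).intervalIntegrable.congr
      (h_rise.symm.mono uIoc_subset_uIcc)
  have h_flat_int : IntervalIntegrable (fun y => trimWeight α γ (F y)) volume (Q γ) x :=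
    intervalIntegrable_const.congr (h_flat.symm.mono uIoc_subset_uIcc)
  calc ∫ y in Iic x, trimWeight α γ (F y)
      = ∫ y in Q α..x, trimWeight α γ (F y) :=
        setIntegral_Iic_eq_intervalIntegral (hQαγ.trans hx1) fun y hy =>
          trimWeight_eq_zero_of_le hαγ hγ ((hFmono.monotone hy).trans_eq hQα)
    _ = (∫ y in Q α..Q γ, trimWeight α γ (F y)) + ∫ y in Q γ..x, trimWeight α γ (F y) :=
        (integral_add_adjacent_intervals h_rise_int h_flat_int).symm
    _ = (∫ y in Q α..Q γ, (F y - α) / (γ - α)) + ∫ y in Q γ..x, (1 : ℝ) := by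
        rw [integral_congr h_rise, integral_congr h_flat]
    _ = _ := by
        rw [intervalIntegral.integral_div, hFmono.integral_sub_eq_of_rightInvOn
          (hQ.mono (Icc_subset_Icc_right (by linarith))) hαγ.le, intervalIntegral.integral_const,
          smul_eq_mul, mul_one]
        ring

theorem smoothly_trimmed_E2
    (α γ : ℝ) (hα : 0 < α) (hαγ : α < γ) (hγ : γ ≤ 1/2)
    (J F Q : ℝ → ℝ)
    (hJ : ∀ u : ℝ, J u =
      if α ≤ u ∧ u < γ then (u - α) / (γ - α)
      else if γ ≤ u ∧ u ≤ 1 - γ then 1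
      else if 1 - γ < u ∧ u ≤ 1 - α then (1 - u - α) / (γ - α)
      else 0)
    (hFcont : Continuous F) (hFmono : StrictMono F)
    (hFQ : ∀ p ∈ Set.Ioo (0:ℝ) 1, F (Q p) = p)
    (hQF : ∀ x : ℝ, Q (F x) = x)
    (x : ℝ) (hx1 : Q γ ≤ x) (hx2 : x ≤ Q (1 - γ)) :
    ∫ y in Set.Iic x, J (F y) =
      (1 / (γ - α)) * ((γ - α) * Q γ - (∫ u in α..γ, Q u)) + x - Q γ :=
  smoothly_trimmed_E2_general α γ hα hαγ hγ J F Q hJ hFmono hFQ x hx1 hx2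
end

section
/- Let x satisfy x > Q(1−α). Then ∫_{-∞}^{x} J(F(y)) dy = (1/(γ−α))·( (γ−α)·Q(γ) − ∫_{α}^{γ} Q(u) du ) + Q(1−γ) − Q(γ) + (1/(γ−α))·( (α−γ)·Q(1−γ) + ∫_{1−γ}^{1−α} Q(u) du ). In particular this value is independent of x. -/
/-!
Write `ramp a b` for the piecewise linear function rising from `0` at `a` to `1` at `b`. The
weight splits as `J = ramp α γ - ramp (1 - γ) (1 - α)`. For a single ramp and `x ≥ Q b`,
`∫_{-∞}^x ramp a b (F y) dy = x - (b - a)⁻¹ ∫_a^b Q`: the integrand vanishes left of `Q a`,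
equals `1` right of `Q b`, and in between the formula `∫_{Q a}^{Q b} F + ∫_a^b Q = b Q b - a Q a`
for the integrals of a function and its inverse applies; that formula is proved by computing the
area under the graph of `F` with Fubini. Both ramps have width `γ - α`, so `x` cancels in the
difference.
-/

open MeasureTheory intervalIntegral Set

lemma integral_Ioc_indicator_Iio {a b c : ℝ} (hac : a ≤ c) (hcb : c ≤ b) :
    ∫ u in Ioc a b, (Iio c).indicator 1 u = c - a := by
  rw [integral_indicator_one measurableSet_Iio, measureReal_restrict_apply measurableSet_Iio,
    show Iio c ∩ Ioc a b = Ioo a c by grind, Real.volume_real_Ioo_of_le hac]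

lemma integral_Ioc_indicator_Ioi {a b c : ℝ} (hac : a ≤ c) (hcb : c ≤ b) :
    ∫ u in Ioc a b, (Ioi c).indicator 1 u = b - c := by
  rw [integral_indicator_one measurableSet_Ioi, measureReal_restrict_apply measurableSet_Ioi,
    show Ioi c ∩ Ioc a b = Ioc c b by grind, Real.volume_real_Ioc_of_le hcb]

section RightInvOn

variable {F Q : ℝ → ℝ} {a b : ℝ}

lemma StrictMono.monotoneOn_of_rightInvOn (hF : StrictMono F) (hFQ : RightInvOn Q F (Icc a b)) :
    MonotoneOn Q (Icc a b) := fun u hu v hv huv =>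
  hF.le_iff_le.mp (by rwa [hFQ hu, hFQ hv])

/-- Both sides are the area of `{(y, u) | Q a < y ≤ Q b, a < u ≤ b, u < F y}`. -/
lemma StrictMono.integral_Ioc_sub_eq_integral_Ioc_sub (hF : StrictMono F)
    (hFQ : RightInvOn Q F (Icc a b)) (hab : a ≤ b) :
    ∫ y in Ioc (Q a) (Q b), (F y - a) = ∫ u in Ioc a b, (Q b - Q u) := by
  have hQ := hF.monotoneOn_of_rightInvOn hFQ
  have ha : a ∈ Icc a b := ⟨le_rfl, hab⟩
  have hb : b ∈ Icc a b := ⟨hab, le_rfl⟩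
  have hint : Integrable (Function.uncurry fun y u => (Iio (F y)).indicator (1 : ℝ → ℝ) u)
      ((volume.restrict (Ioc (Q a) (Q b))).prod (volume.restrict (Ioc a b))) := by
    have hS : MeasurableSet {p : ℝ × ℝ | p.2 < F p.1} :=
      measurableSet_lt measurable_snd (hF.monotone.measurable.comp measurable_fst)
    refine (integrable_const (1 : ℝ)).mono' ?_ (ae_of_all _ fun p => ?_)
    · exact (measurable_one.indicator hS).aestronglyMeasurable
    · by_cases h : p.2 < F p.1 <;> simp [Function.uncurry, Set.indicator, h]
  calc ∫ y in Ioc (Q a) (Q b), (F y - a)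
      = ∫ y in Ioc (Q a) (Q b), ∫ u in Ioc a b, (Iio (F y)).indicator 1 u := by
        refine setIntegral_congr_fun measurableSet_Ioc fun y hy => ?_
        have h₁ : a < F y := hFQ ha ▸ hF hy.1
        have h₂ : F y ≤ b := hFQ hb ▸ hF.monotone hy.2
        exact (integral_Ioc_indicator_Iio h₁.le h₂).symm
    _ = ∫ u in Ioc a b, ∫ y in Ioc (Q a) (Q b), (Iio (F y)).indicator 1 u :=
        integral_integral_swap hint
    _ = ∫ u in Ioc a b, ∫ y in Ioc (Q a) (Q b), (Ioi (Q u)).indicator 1 y := by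
        refine setIntegral_congr_fun measurableSet_Ioc fun u hu => ?_
        have hlt : ∀ y, u < F y ↔ Q u < y := fun y => by
          rw [← hF.lt_iff_lt (a := Q u), hFQ (Ioc_subset_Icc_self hu)]
        simp only [indicator, mem_Iio, mem_Ioi, hlt, Pi.one_apply]
    _ = ∫ u in Ioc a b, (Q b - Q u) := by
        refine setIntegral_congr_fun measurableSet_Ioc fun u hu => ?_
        have hu' := Ioc_subset_Icc_self hu
        exact integral_Ioc_indicator_Ioi (hQ ha hu' hu'.1) (hQ hu' hb hu'.2)

lemma StrictMono.integral_add_integral_of_rightInvOn (hF : StrictMono F)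
    (hFQ : RightInvOn Q F (Icc a b)) (hab : a ≤ b) :
    (∫ y in Q a..Q b, F y) + ∫ u in a..b, Q u = b * Q b - a * Q a := by
  have hQab : Q a ≤ Q b := hF.monotoneOn_of_rightInvOn hFQ ⟨le_rfl, hab⟩ ⟨hab, le_rfl⟩ hab
  have hQint : IntervalIntegrable Q volume a b := by
    apply MonotoneOn.intervalIntegrable
    rw [uIcc_of_le hab]
    exact hF.monotoneOn_of_rightInvOn hFQ
  have key := hF.integral_Ioc_sub_eq_integral_Ioc_sub hFQ hab
  rw [← integral_of_le hQab, ← integral_of_le hab, integral_sub hF.monotone.intervalIntegrable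
    intervalIntegrable_const, integral_sub intervalIntegrable_const hQint] at key
  simp only [intervalIntegral.integral_const, smul_eq_mul] at key
  linarith

end RightInvOn

noncomputable def ramp (a b u : ℝ) : ℝ := (max a (min u b) - a) / (b - a)

section Ramp

variable {a b u : ℝ}

lemma ramp_of_le_left (h : u ≤ a) : ramp a b u = 0 := by
  simp [ramp, (min_le_left u b).trans h]

lemma ramp_of_mem_Icc (h : u ∈ Icc a b) : ramp a b u = (u - a) / (b - a) := by
  rw [ramp, min_eq_left h.2, max_eq_right h.1]

lemma ramp_of_le_right (hab : a < b) (h : b ≤ u) : ramp a b u = 1 := by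
  rw [ramp, min_eq_right h, max_eq_right hab.le, div_self (sub_ne_zero.2 hab.ne')]

lemma monotone_ramp (hab : a ≤ b) : Monotone (ramp a b) := fun _ _ h =>
  div_le_div_of_nonneg_right (by gcongr) (sub_nonneg.2 hab)

end Ramp

section RampIntegral

variable {F Q : ℝ → ℝ} {a b c x : ℝ}

lemma Monotone.integrableOn_Iic_ramp_comp (hF : Monotone F) (hab : a ≤ b) (hc : F c ≤ a) :
    IntegrableOn (fun y => ramp a b (F y)) (Iic x) := by
  have hleft : IntegrableOn (fun y => ramp a b (F y)) (Iic c) :=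
    integrableOn_zero.congr_fun (fun y hy => (ramp_of_le_left ((hF hy).trans hc)).symm)
      measurableSet_Iic
  have hright : IntegrableOn (fun y => ramp a b (F y)) (Ioc c x) :=
    ((monotone_ramp hab).comp hF).intervalIntegrable.1
  exact (hleft.union hright).mono_set fun y hy => by
    by_cases h : y ≤ c
    exacts [Or.inl h, Or.inr ⟨not_le.1 h, hy⟩]

lemma StrictMono.integral_Iic_ramp_comp (hF : StrictMono F) (hFQ : RightInvOn Q F (Icc a b))
    (hab : a < b) (hx : Q b ≤ x) :
    ∫ y in Iic x, ramp a b (F y) = x - (∫ u in a..b, Q u) / (b - a) := by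
  have ha : a ∈ Icc a b := ⟨le_rfl, hab.le⟩
  have hb : b ∈ Icc a b := ⟨hab.le, le_rfl⟩
  have hQab : Q a ≤ Q b := hF.monotoneOn_of_rightInvOn hFQ ha hb hab.le
  have hint : ∀ x, IntegrableOn (fun y => ramp a b (F y)) (Iic x) := fun _ =>
    hF.monotone.integrableOn_Iic_ramp_comp hab.le (hFQ ha).le
  have hii : ∀ c d, IntervalIntegrable (fun y => ramp a b (F y)) volume c d := fun _ _ =>
    ((monotone_ramp hab.le).comp hF.monotone).intervalIntegrable
  have hleft : ∫ y in Iic (Q a), ramp a b (F y) = 0 :=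
    setIntegral_eq_zero_of_forall_eq_zero fun y hy => ramp_of_le_left (hFQ ha ▸ hF.monotone hy)
  have hmiddle : ∫ y in Q a..Q b, ramp a b (F y) = ∫ y in Q a..Q b, (F y - a) / (b - a) := by
    refine integral_congr fun y hy => ramp_of_mem_Icc ?_
    rw [uIcc_of_le hQab] at hy
    exact ⟨hFQ ha ▸ hF.monotone hy.1, hFQ hb ▸ hF.monotone hy.2⟩
  have hright : ∫ y in Q b..x, ramp a b (F y) = ∫ _ in Q b..x, (1 : ℝ) := by
    refine integral_congr fun y hy => ramp_of_le_right hab ?_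
    rw [uIcc_of_le hx] at hy
    exact hFQ hb ▸ hF.monotone hy.1
  have hFint : ∫ y in Q a..Q b, F y = b * Q b - a * Q a - ∫ u in a..b, Q u := by
    linarith [hF.integral_add_integral_of_rightInvOn hFQ hab.le]
  rw [sub_eq_iff_eq_add'.1 (integral_Iic_sub_Iic (hint (Q a)) (hint x)), hleft,
    ← integral_add_adjacent_intervals (hii _ _) (hii _ _), hmiddle, hright,
    intervalIntegral.integral_div, integral_sub hF.monotone.intervalIntegrable
      intervalIntegrable_const, hFint]
  simp only [intervalIntegral.integral_const, smul_eq_mul]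
  field_simp [sub_ne_zero.2 hab.ne']
  ring

end RampIntegral

lemma trimWeight_eq_ramp_sub_ramp {α γ : ℝ} (hαγ : α < γ) (hγ : γ ≤ 1 / 2) (u : ℝ) :
    trimWeight α γ u = ramp α γ u - ramp (1 - γ) (1 - α) u := by
  have hne : γ - α ≠ 0 := sub_ne_zero.2 hαγ.ne'
  unfold trimWeight
  split_ifs with h₁ h₂ h₃
  · rw [ramp_of_mem_Icc ⟨h₁.1, h₁.2.le⟩, ramp_of_le_left (by linarith), sub_zero]
  · rw [ramp_of_le_right hαγ h₂.1, ramp_of_le_left h₂.2, sub_zero]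
  · rw [ramp_of_le_right hαγ (by linarith), ramp_of_mem_Icc ⟨h₃.1.le, h₃.2⟩,
      show 1 - α - (1 - γ) = γ - α by ring]
    field_simp
    ring
  · by_cases hu : u < α
    · rw [ramp_of_le_left hu.le, ramp_of_le_left (by linarith), sub_zero]
    · have hu' : 1 - α < u := by
        by_contra! h
        by_cases hγu : u < γ
        · exact h₁ ⟨not_lt.1 hu, hγu⟩
        by_cases hu₁ : u ≤ 1 - γ
        · exact h₂ ⟨not_lt.1 hγu, hu₁⟩
        · exact h₃ ⟨not_le.1 hu₁, h⟩
      rw [ramp_of_le_right hαγ (by linarith), ramp_of_le_right (by linarith) hu'.le, sub_self]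

theorem smoothly_trimmed_E4_general
    (α γ : ℝ) (hα : 0 < α) (hαγ : α < γ) (hγ : γ ≤ 1/2)
    (J F Q : ℝ → ℝ)
    (hJ : ∀ u : ℝ, J u =
      if α ≤ u ∧ u < γ then (u - α) / (γ - α)
      else if γ ≤ u ∧ u ≤ 1 - γ then 1
      else if 1 - γ < u ∧ u ≤ 1 - α then (1 - u - α) / (γ - α)
      else 0)
    (hFmono : StrictMono F)
    (hFQ : ∀ p ∈ Set.Ioo (0:ℝ) 1, F (Q p) = p)
    (x : ℝ) (hx : Q (1 - α) < x) :
    ∫ y in Set.Iic x, J (F y) =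
      (1 / (γ - α)) * ((γ - α) * Q γ - (∫ u in α..γ, Q u))
        + Q (1 - γ) - Q γ
        + (1 / (γ - α)) * ((α - γ) * Q (1 - γ) + (∫ u in (1 - γ)..(1 - α), Q u)) := by
  have hne : γ - α ≠ 0 := sub_ne_zero.2 hαγ.ne'
  have hFQ' : RightInvOn Q F (Icc α (1 - α)) := fun p hp =>
    hFQ p ⟨hα.trans_le hp.1, by linarith [hp.2]⟩
  have hFQ₁ : RightInvOn Q F (Icc α γ) := hFQ'.mono (Icc_subset_Icc le_rfl (by linarith))
  have hFQ₂ : RightInvOn Q F (Icc (1 - γ) (1 - α)) :=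
    hFQ'.mono (Icc_subset_Icc (by linarith) le_rfl)
  have hQγ : Q γ ≤ x := (hFmono.monotoneOn_of_rightInvOn hFQ' ⟨hαγ.le, by linarith⟩
    ⟨by linarith, le_rfl⟩ (by linarith)).trans hx.le
  have hJF : ∀ y, J (F y) = ramp α γ (F y) - ramp (1 - γ) (1 - α) (F y) := fun y =>
    (hJ (F y)).trans (trimWeight_eq_ramp_sub_ramp hαγ hγ (F y))
  simp_rw [hJF]
  have hint₁ := hFmono.monotone.integrableOn_Iic_ramp_comp (x := x) hαγ.le
    (hFQ₁ ⟨le_rfl, hαγ.le⟩).le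
  have hint₂ := hFmono.monotone.integrableOn_Iic_ramp_comp (x := x) (b := 1 - α) (by linarith)
    (hFQ₂ ⟨le_rfl, by linarith⟩).le
  rw [integral_sub hint₁ hint₂,
    hFmono.integral_Iic_ramp_comp hFQ₁ hαγ hQγ,
    hFmono.integral_Iic_ramp_comp hFQ₂ (by linarith) hx.le,
    show 1 - α - (1 - γ) = γ - α by ring]
  field_simp
  ring

theorem smoothly_trimmed_E4
    (α γ : ℝ) (hα : 0 < α) (hαγ : α < γ) (hγ : γ ≤ 1/2)
    (J F Q : ℝ → ℝ)
    (hJ : ∀ u : ℝ, J u =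
      if α ≤ u ∧ u < γ then (u - α) / (γ - α)
      else if γ ≤ u ∧ u ≤ 1 - γ then 1
      else if 1 - γ < u ∧ u ≤ 1 - α then (1 - u - α) / (γ - α)
      else 0)
    (hFcont : Continuous F) (hFmono : StrictMono F)
    (hFQ : ∀ p ∈ Set.Ioo (0:ℝ) 1, F (Q p) = p)
    (hQF : ∀ x : ℝ, Q (F x) = x)
    (x : ℝ) (hx : Q (1 - α) < x) :
    ∫ y in Set.Iic x, J (F y) =
      (1 / (γ - α)) * ((γ - α) * Q γ - (∫ u in α..γ, Q u))
        + Q (1 - γ) - Q γ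
        + (1 / (γ - α)) * ((α - γ) * Q (1 - γ) + (∫ u in (1 - γ)..(1 - α), Q u)) :=
  smoothly_trimmed_E4_general α γ hα hαγ hγ J F Q hJ hFmono hFQ x hx
end

section
/- Let x_1, …, x_k be real numbers, let w_1, …, w_k be nonnegative reals with Σ_i w_i = 1, let μ ∈ ℝ, set W_i = x_i − μ, and let λ ∈ ℝ satisfy 1 + λ·W_i > 0 for every i and Σ_i w_i·W_i/(1 + λ·W_i) = 0. Set p*_i = w_i/(1 + λ·W_i), and let m > 0. Then for every vector (p_1, …, p_k) with p_i > 0, Σ_i p_i = 1 and Σ_i p_i·x_i = μ, one has Π_i (p_i/w_i)^{m·w_i} ≤ Π_i (p*_i/w_i)^{m·w_i}; i.e. p* attains the supremum in the profile empirical likelihood ratio. -/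
/-!
Weak duality for empirical likelihood: for any `λ` with `1 + λ W_i > 0`, each factor satisfies
`(p_i / w_i)^(m w_i) ≤ (p*_i / w_i)^(m w_i) · exp (m (p_i (1 + λ W_i) - w_i))`,
by `log t ≤ t - 1` applied to `t = p_i (1 + λ W_i) / w_i`. The exponents sum to zero because `p`
is a probability vector with mean `μ`, so the product of the correction factors is `1`.
-/

open Real Finset

lemma mul_log_div_le_sub {w a : ℝ} (hw : 0 ≤ w) (ha : 0 < a) : w * log (a / w) ≤ a - w := by
  rcases hw.eq_or_lt with rfl | hw
  · simpa using ha.le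
  calc w * log (a / w) ≤ w * (a / w - 1) :=
        mul_le_mul_of_nonneg_left (log_le_sub_one_of_pos (div_pos ha hw)) hw.le
    _ = a - w := by field_simp

lemma rpow_div_le_rpow_div_mul_exp {w p d m : ℝ} (hw : 0 ≤ w) (hp : 0 < p) (hd : 0 < d)
    (hm : 0 ≤ m) :
    (p / w) ^ (m * w) ≤ (w / d / w) ^ (m * w) * exp (m * (p * d - w)) := by
  rcases hw.eq_or_lt with rfl | hw
  · simpa using one_le_exp (mul_nonneg hm (mul_pos hp hd).le)
  have hlog_inv : log (w / d / w) = -log d := by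
    rw [div_div_cancel_left' hw.ne', log_inv]
  have hlog_mul : log (p * d / w) = log (p / w) + log d := by
    rw [mul_div_right_comm, log_mul (div_pos hp hw).ne' hd.ne']
  rw [rpow_def_of_pos (div_pos hp hw), rpow_def_of_pos (div_pos (div_pos hw hd) hw), ← exp_add,
    exp_le_exp, hlog_inv]
  have hgibbs := mul_log_div_le_sub hw.le (mul_pos hp hd)
  rw [hlog_mul] at hgibbs
  linear_combination m * hgibbs

theorem el_lagrange_attains_sup_general
    (k : ℕ) (x w : Fin k → ℝ) (hw : ∀ i, 0 ≤ w i)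
    (hwsum : ∑ i, w i = 1)
    (μ : ℝ) (W : Fin k → ℝ) (hW : ∀ i, W i = x i - μ)
    (lam : ℝ) (hpos : ∀ i, 0 < 1 + lam * W i)
    (pstar : Fin k → ℝ) (hpstar : ∀ i, pstar i = w i / (1 + lam * W i))
    (m : ℝ) (hm : 0 < m)
    (p : Fin k → ℝ) (hp : ∀ i, 0 < p i)
    (hpsum : ∑ i, p i = 1) (hpmean : ∑ i, p i * x i = μ) :
    ∏ i, (p i / w i) ^ (m * w i) ≤ ∏ i, (pstar i / w i) ^ (m * w i) := by
  obtain rfl : pstar = fun i => w i / (1 + lam * W i) := funext hpstar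
  have hbalance : ∑ i, (p i * (1 + lam * W i) - w i) = 0 := by
    have hexpand : ∀ i,
        p i * (1 + lam * W i) - w i = p i + lam * (p i * x i) - lam * μ * p i - w i := fun i => by
      rw [hW]; ring
    simp only [hexpand, sum_sub_distrib, sum_add_distrib, ← mul_sum, hpsum, hpmean, hwsum]
    ring
  calc ∏ i, (p i / w i) ^ (m * w i)
      ≤ ∏ i, ((w i / (1 + lam * W i) / w i) ^ (m * w i) *
          exp (m * (p i * (1 + lam * W i) - w i))) :=
        prod_le_prod (fun i _ => rpow_nonneg (div_nonneg (hp i).le (hw i)) _)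
          fun i _ => rpow_div_le_rpow_div_mul_exp (hw i) (hp i) (hpos i) hm.le
    _ = ∏ i, (w i / (1 + lam * W i) / w i) ^ (m * w i) := by
        rw [prod_mul_distrib, ← exp_sum, ← mul_sum, hbalance, mul_zero, exp_zero, mul_one]

theorem el_lagrange_attains_sup
    (k : ℕ) (x w : Fin k → ℝ) (hw : ∀ i, 0 ≤ w i)
    (hwsum : ∑ i, w i = 1)
    (μ : ℝ) (W : Fin k → ℝ) (hW : ∀ i, W i = x i - μ)
    (lam : ℝ) (hpos : ∀ i, 0 < 1 + lam * W i)
    (hroot : ∑ i, w i * W i / (1 + lam * W i) = 0)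
    (pstar : Fin k → ℝ) (hpstar : ∀ i, pstar i = w i / (1 + lam * W i))
    (m : ℝ) (hm : 0 < m)
    (p : Fin k → ℝ) (hp : ∀ i, 0 < p i)
    (hpsum : ∑ i, p i = 1) (hpmean : ∑ i, p i * x i = μ) :
    ∏ i, (p i / w i) ^ (m * w i) ≤ ∏ i, (pstar i / w i) ^ (m * w i) :=
  el_lagrange_attains_sup_general k x w hw hwsum μ W hW lam hpos pstar hpstar m hm p hp hpsum hpmean
end
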